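/- arXiv:2203.09630 — 6 statements merged into one kernel-verified Lean document; each statement's English description precedes it below -/
import Mathlib

section
/- For the reciprocal sigmoid function f_R(x) = (1/2)·(x/(1+|x|)) + 1/2, the function softmin_{f_R}(x, 0) := x · f_R(−x) is strictly monotonically increasing in x, with derivative at least (1/2)·1/(1+|x|)² > 0 for all real x. -/
/-!
The map `x ↦ x / (1 + |x|)` agrees with `x / (1 + x)` on `[0, ∞)` and with `x / (1 - x)` on
`(-∞, 0]`; both one-sided derivatives equal `1 / (1 + |x|)²`, so it is differentiable everywhere,
including at `0`. Hence `(x · f_R(-x))' = f_R(-x) - x / (2 (1 + |x|)²)`, which exceeds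
`1 / (2 (1 + |x|)²)` by `(|x| - x)(|x| + 2) / (2 (1 + |x|)²) ≥ 0`.
-/

open Set

noncomputable def fR (x : ℝ) : ℝ := (1/2) * (x / (1 + |x|)) + 1/2

lemma hasDerivWithinAt_div_one_add_abs_Ici (x : ℝ) :
    HasDerivWithinAt (fun y : ℝ => y / (1 + |y|)) (1 / (1 + |x|) ^ 2) (Ici 0) x := by
  rcases lt_or_ge x 0 with hx | hx
  · exact HasFDerivWithinAt.of_notMem_closure (by simpa using hx)
  · have hu : HasDerivAt (fun y : ℝ => y / (1 + y)) (1 / (1 + x) ^ 2) x :=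
      ((hasDerivAt_id' x).div ((hasDerivAt_id' x).const_add 1) (by positivity)).congr_deriv
        (by ring)
    rw [abs_of_nonneg hx]
    exact hu.hasDerivWithinAt.congr (fun y hy => by rw [abs_of_nonneg hy]) (by rw [abs_of_nonneg hx])

lemma hasDerivWithinAt_div_one_add_abs_Iic (x : ℝ) :
    HasDerivWithinAt (fun y : ℝ => y / (1 + |y|)) (1 / (1 + |x|) ^ 2) (Iic 0) x := by
  rcases lt_or_ge 0 x with hx | hx
  · exact HasFDerivWithinAt.of_notMem_closure (by simpa using hx)
  · have hv : HasDerivAt (fun y : ℝ => y / (1 - y)) (1 / (1 - x) ^ 2) x :=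
      ((hasDerivAt_id' x).div ((hasDerivAt_id' x).const_sub 1) (by linarith)).congr_deriv
        (by ring)
    rw [abs_of_nonpos hx, ← sub_eq_add_neg]
    exact hv.hasDerivWithinAt.congr (fun y hy => by rw [abs_of_nonpos hy, ← sub_eq_add_neg])
      (by rw [abs_of_nonpos hx, ← sub_eq_add_neg])

lemma hasDerivAt_div_one_add_abs (x : ℝ) :
    HasDerivAt (fun y : ℝ => y / (1 + |y|)) (1 / (1 + |x|) ^ 2) x := by
  simpa [Iic_union_Ici] using
    (hasDerivWithinAt_div_one_add_abs_Iic x).union (hasDerivWithinAt_div_one_add_abs_Ici x)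

lemma hasDerivAt_fR (x : ℝ) : HasDerivAt fR (1 / 2 * (1 / (1 + |x|) ^ 2)) x :=
  ((hasDerivAt_div_one_add_abs x).const_mul (1 / 2)).add_const (1 / 2)

lemma hasDerivAt_mul_fR_neg (x : ℝ) :
    HasDerivAt (fun y => y * fR (-y)) (fR (-x) - x * (1 / 2 * (1 / (1 + |x|) ^ 2))) x :=
  ((hasDerivAt_id' x).mul ((hasDerivAt_fR (-x)).comp x (hasDerivAt_neg x))).congr_deriv
    (by simp only [Function.comp_apply, abs_neg]; ring)

lemma le_fR_neg_sub_mul (x : ℝ) :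
    1 / 2 * (1 / (1 + |x|) ^ 2) ≤ fR (-x) - x * (1 / 2 * (1 / (1 + |x|) ^ 2)) := by
  have key : fR (-x) - x * (1 / 2 * (1 / (1 + |x|) ^ 2)) - 1 / 2 * (1 / (1 + |x|) ^ 2)
      = (|x| - x) * (|x| + 2) / (2 * (1 + |x|) ^ 2) := by
    rw [fR, abs_neg]
    field_simp
    ring
  have : 0 ≤ (|x| - x) * (|x| + 2) / (2 * (1 + |x|) ^ 2) :=
    div_nonneg (mul_nonneg (sub_nonneg.2 (le_abs_self x)) (by positivity)) (by positivity)
  linarith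

theorem stmt_0 :
    StrictMono (fun x : ℝ => x * fR (-x)) ∧
    ∀ x : ℝ,
      (1/2) * (1 / (1 + |x|)^2) ≤ deriv (fun y : ℝ => y * fR (-y)) x ∧
      0 < (1/2) * (1 / (1 + |x|)^2) := by
  have hderiv_ge (x : ℝ) : (1/2) * (1 / (1 + |x|)^2) ≤ deriv (fun y : ℝ => y * fR (-y)) x :=
    (hasDerivAt_mul_fR_neg x).deriv ▸ le_fR_neg_sub_mul x
  exact ⟨strictMono_of_deriv_pos fun x => lt_of_lt_of_le (by positivity) (hderiv_ge x),
    fun x => ⟨hderiv_ge x, by positivity⟩⟩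
end

section
/- Let f : ℝ → [0,1] be a differentiable sigmoid function (monotonically non-decreasing, f(x) + f(−x) = 1, lim_{x→−∞} f(x) = 0, lim_{x→∞} f(x) = 1). If the function x ↦ x·f(−x) is monotonically non-decreasing on ℝ and lim_{x→∞} x²·f'(x) exists, then lim_{x→∞} x²·f'(x) > 0 (i.e., f'(x) ∈ Ω(1/x²)). -/
/-!
Fix `x₀ > 0` with `f (-x₀) > 0` (it exists since `f` is continuous and `f 0 = 1/2`).
Monotonicity of `x ↦ x f(-x)` and the symmetry give `1 - f x = f (-x) ≥ c / x` for `x ≥ x₀`,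
where `c = x₀ f(-x₀) > 0`. If `L ≤ 0`, then eventually `x² f'(x) ≤ c / 2`, so `f x + c / (2x)`
is eventually non-increasing; since it tends to `1`, we get `1 - f x ≤ c / (2x)`, a contradiction.
-/

open Filter Set Topology

lemma sub_le_div_of_sq_mul_deriv_le {f : ℝ → ℝ} {a ε l : ℝ} (ha : 0 < a)
    (hf : DifferentiableOn ℝ f (Ici a)) (htop : Tendsto f atTop (𝓝 l))
    (hderiv : ∀ t > a, t ^ 2 * deriv f t ≤ ε) :
    l - f a ≤ ε / a := by
  set g : ℝ → ℝ := fun t => f t + ε * t⁻¹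
  have hg_anti : AntitoneOn g (Ici a) := by
    have hne : ∀ t ∈ Ici a, t ≠ 0 := fun t ht => (ha.trans_le ht).ne'
    refine antitoneOn_of_deriv_nonpos (convex_Ici a)
      (hf.continuousOn.add (continuousOn_const.mul (continuousOn_inv₀.mono hne))) ?_ fun t ht => ?_
    · rw [interior_Ici]
      exact (hf.mono Ioi_subset_Ici_self).add
        (differentiableOn_const ε |>.mul
          (differentiableOn_inv.mono fun t ht => hne t (mem_Ici_of_Ioi ht)))
    rw [interior_Ici] at ht
    have ht0 : 0 < t := ha.trans ht
    have hd : HasDerivAt g (deriv f t + ε * -(t ^ 2)⁻¹) t :=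
      (hf.differentiableAt (Ici_mem_nhds ht)).hasDerivAt.fun_add
        ((hasDerivAt_inv ht0.ne').const_mul ε)
    rw [hd.deriv, mul_neg, ← div_eq_mul_inv, add_neg_nonpos_iff, le_div_iff₀ (by positivity),
      mul_comm]
    exact hderiv t ht
  have hg_lim : Tendsto g atTop (𝓝 (l + ε * 0)) :=
    htop.add (tendsto_inv_atTop_zero.const_mul ε)
  have hle : l + ε * 0 ≤ g a :=
    le_of_tendsto hg_lim (eventually_atTop.2 ⟨a, fun t ht => hg_anti self_mem_Ici ht ht⟩)
  simp only [g, mul_zero, add_zero, ← div_eq_mul_inv] at hle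
  linarith

lemma exists_pos_le_mul_one_sub {f : ℝ → ℝ} (hcont : ContinuousAt f 0)
    (hsym : ∀ x, f x + f (-x) = 1) (hswap : Monotone fun x => x * f (-x)) :
    ∃ c > 0, ∀ᶠ x in atTop, c ≤ x * (1 - f x) := by
  have hf0 : 0 < f 0 := by
    have h0 := hsym 0
    rw [neg_zero] at h0
    linarith
  obtain ⟨y, hfy, hy⟩ : ∃ y, 0 < f y ∧ y < 0 :=
    ((hcont.eventually (lt_mem_nhds hf0)).filter_mono nhdsWithin_le_nhds |>.and
      (self_mem_nhdsWithin (s := Iio 0))).exists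
  refine ⟨-y * f y, mul_pos (neg_pos.2 hy) hfy, eventually_atTop.2 ⟨-y, fun x hx => ?_⟩⟩
  have hmul : -y * f (- -y) ≤ x * f (-x) := hswap hx
  rw [← hsym x, add_sub_cancel_left]
  rwa [neg_neg] at hmul

theorem stmt_6_general (f : ℝ → ℝ)
    (hdiff : Differentiable ℝ f)
    (hsym : ∀ x, f x + f (-x) = 1)
    (htop : Tendsto f atTop (nhds 1))
    (hswap : Monotone (fun x : ℝ => x * f (-x)))
    (L : ℝ)
    (hlim : Tendsto (fun x : ℝ => x^2 * deriv f x) atTop (nhds L)) :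
    0 < L := by
  obtain ⟨c, hc, hlower⟩ := exists_pos_le_mul_one_sub (hdiff 0).continuousAt hsym hswap
  by_contra! hL
  have hupper : ∀ᶠ t in atTop, t ^ 2 * deriv f t ≤ c / 2 :=
    hlim.eventually (ge_mem_nhds (by linarith))
  obtain ⟨a, ha⟩ := eventually_atTop.1 (hlower.and (hupper.and (eventually_gt_atTop 0)))
  obtain ⟨hca, -, ha0⟩ := ha a le_rfl
  have htail : 1 - f a ≤ c / 2 / a :=
    sub_le_div_of_sq_mul_deriv_le ha0 hdiff.differentiableOn htop fun t ht => (ha t ht.le).2.1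
  have : c ≤ c / 2 :=
    calc c ≤ a * (1 - f a) := hca
      _ ≤ a * (c / 2 / a) := by gcongr
      _ = c / 2 := by field_simp
  linarith

theorem stmt_6 (f : ℝ → ℝ)
    (hdiff : Differentiable ℝ f)
    (hrange : ∀ x, f x ∈ Set.Icc (0:ℝ) 1)
    (hmono : Monotone f)
    (hsym : ∀ x, f x + f (-x) = 1)
    (hbot : Tendsto f atBot (nhds 0))
    (htop : Tendsto f atTop (nhds 1))
    (hswap : Monotone (fun x : ℝ => x * f (-x)))
    (L : ℝ)
    (hlim : Tendsto (fun x : ℝ => x^2 * deriv f x) atTop (nhds L)) :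
    0 < L :=
  stmt_6_general f hdiff hsym htop hswap L hlim
end

section
/- Let f : ℝ → [0,1] be a differentiable sigmoid function such that x ↦ x·f(−x) is monotonically non-decreasing and bounded above by c > 0. Then x²·f'(−x) ≤ c for all x > 0; i.e., bounded error together with monotonicity implies f'(x) ∈ O(1/x²). -/
/- The derivative of the non-decreasing map y ↦ y·f(-y) at x is f(-x) - x·f'(-x) ≥ 0, so
x·f'(-x) ≤ f(-x); multiplying by x > 0 gives x²·f'(-x) ≤ x·f(-x) ≤ c. -/

lemma mul_deriv_neg_le_of_monotone {f : ℝ → ℝ} {x : ℝ} (hf : DifferentiableAt ℝ f (-x))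
    (hmono : Monotone (fun y : ℝ => y * f (-y))) :
    x * deriv f (-x) ≤ f (-x) := by
  have hderiv : HasDerivAt (fun y : ℝ => y * f (-y)) (1 * f (-x) + x * (deriv f (-x) * -1)) x :=
    (hasDerivAt_id x).mul (hf.hasDerivAt.comp x (hasDerivAt_neg x))
  have := hderiv.deriv ▸ hmono.deriv_nonneg (x := x)
  linarith

theorem stmt_8_general (f : ℝ → ℝ)
    (hdiff : Differentiable ℝ f)
    (c : ℝ)
    (hswap : Monotone (fun x : ℝ => x * f (-x)))
    (hbound : ∀ x : ℝ, 0 < x → x * f (-x) ≤ c) :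
    ∀ x : ℝ, 0 < x → x^2 * deriv f (-x) ≤ c := by
  intro x hx
  calc x ^ 2 * deriv f (-x) = x * (x * deriv f (-x)) := by ring
    _ ≤ x * f (-x) := mul_le_mul_of_nonneg_left (mul_deriv_neg_le_of_monotone (hdiff _) hswap) hx.le
    _ ≤ c := hbound x hx

theorem stmt_8 (f : ℝ → ℝ)
    (hdiff : Differentiable ℝ f)
    (hrange : ∀ x, f x ∈ Set.Icc (0:ℝ) 1)
    (hmono : Monotone f)
    (hsym : ∀ x, f x + f (-x) = 1)
    (c : ℝ) (hc : 0 < c)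
    (hswap : Monotone (fun x : ℝ => x * f (-x)))
    (hbound : ∀ x : ℝ, 0 < x → x * f (-x) ≤ c) :
    ∀ x : ℝ, 0 < x → x^2 * deriv f (-x) ≤ c :=
  stmt_8_general f hdiff c hswap hbound
end

section
/- For any 1-Lipschitz sigmoid function f with f(0) = 1/2 such that x ↦ x·f(−x) is monotonically non-decreasing, one has f(−x) ≥ 1/(16x) for all x > 1/4, and consequently the error bound sup_{x>0} x·f(−x) ≥ 1/16. -/
/-! Lipschitz continuity with `f 0 = 1/2` gives `f (-1/4) ≥ 1/4`, i.e. `x f(-x) ≥ 1/16` at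
`x = 1/4`; monotonicity of `x ↦ x f(-x)` carries this lower bound to every `x ≥ 1/4`. -/

theorem le_div_of_monotone_mul {g : ℝ → ℝ} (hg : Monotone fun x => x * g x) {a x : ℝ}
    (hax : a ≤ x) (hx : 0 < x) : a * g a / x ≤ g x := by
  rw [div_le_iff₀ hx, mul_comm (g x)]
  exact hg hax

theorem quarter_le_apply_neg_quarter {f : ℝ → ℝ} (hlip : LipschitzWith 1 f) (h0 : f 0 = 1/2) :
    1/4 ≤ f (-(1/4)) := by
  have h := hlip.le_add_mul 0 (-(1/4))
  rw [h0, Real.dist_eq] at h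
  norm_num at h
  linarith

theorem stmt_9_general (f : ℝ → ℝ)
    (hlip : LipschitzWith 1 f)
    (h0 : f 0 = 1/2)
    (hswap : Monotone (fun x : ℝ => x * f (-x))) :
    (∀ x : ℝ, 1/4 < x → 1/(16*x) ≤ f (-x)) ∧
    (∀ c : ℝ, (∀ x : ℝ, 0 < x → x * f (-x) ≤ c) → 1/16 ≤ c) := by
  have hquarter : (1/16 : ℝ) ≤ 1/4 * f (-(1/4)) := by
    linarith [quarter_le_apply_neg_quarter hlip h0]
  refine ⟨fun x hx => ?_, fun c hc => hquarter.trans (hc (1/4) (by norm_num))⟩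
  have hxpos : 0 < x := by linarith
  calc 1/(16*x) = 1/16 / x := by rw [div_div]
    _ ≤ 1/4 * f (-(1/4)) / x := by gcongr
    _ ≤ f (-x) := le_div_of_monotone_mul (g := fun x => f (-x)) hswap hx.le hxpos

theorem stmt_9 (f : ℝ → ℝ)
    (hcont : Continuous f)
    (hrange : ∀ x, f x ∈ Set.Icc (0:ℝ) 1)
    (hmono : Monotone f)
    (hsym : ∀ x, f x + f (-x) = 1)
    (hlip : LipschitzWith 1 f)
    (h0 : f 0 = 1/2)
    (hswap : Monotone (fun x : ℝ => x * f (-x))) :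
    (∀ x : ℝ, 1/4 < x → 1/(16*x) ≤ f (-x)) ∧
    (∀ c : ℝ, (∀ x : ℝ, 0 < x → x * f (-x) ≤ c) → 1/16 ≤ c) :=
  stmt_9_general f hlip h0 hswap
end

section
/- No relaxed maximum operator of the form softmax_f(a,b) = a·f(a−b) + b·f(b−a), with f a sigmoid function satisfying f(x)+f(−x)=1 and 0 < f(x) < 1 for some x > 0, can be associative: if softmax_f is both idempotent and associative, then softmax_f(a,b) = max(a,b) for all a, b, contradicting strict relaxation. -/
/-! Associativity applied to `(t, 0, 0)` gives `f (t * f t) = 1` for `t > 0`. Since `f t ≥ f 0 = 1/2`,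
the point `t * f t` lies strictly below `t` if `f t < 1` and strictly above it if `f t > 1`, and
monotonicity rules out both; so `f` is the Heaviside step, for which `softmax f` is `max`. -/

def softmax (f : ℝ → ℝ) (a b : ℝ) : ℝ := a * f (a - b) + b * f (b - a)

namespace Softmax

variable {f : ℝ → ℝ} {a b t : ℝ}

lemma apply_zero_eq_half (hsym : ∀ x, f x + f (-x) = 1) : f 0 = 1 / 2 := by
  linarith [neg_zero (G := ℝ) ▸ hsym 0]

lemma softmax_self (hsym : ∀ x, f x + f (-x) = 1) : softmax f a a = a := by
  simp only [softmax, sub_self, apply_zero_eq_half hsym]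
  ring

lemma apply_mul_self_eq_one (ht : 0 < t) (hft : 0 < f t)
    (hassoc : softmax f t (softmax f 0 0) = softmax f (softmax f t 0) 0) :
    f (t * f t) = 1 := by
  simp only [softmax, sub_zero, zero_sub, zero_mul, add_zero] at hassoc
  have hne : t * f t ≠ 0 := (mul_pos ht hft).ne'
  simpa [hne] using congrArg (· / (t * f t)) hassoc.symm

lemma apply_eq_one_of_pos (hmono : Monotone f) (hsym : ∀ x, f x + f (-x) = 1)
    (hassoc : ∀ a b c, softmax f a (softmax f b c) = softmax f (softmax f a b) c)
    (ht : 0 < t) : f t = 1 := by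
  have hhalf : 1 / 2 ≤ f t := apply_zero_eq_half hsym ▸ hmono ht.le
  have hfix := apply_mul_self_eq_one ht (by linarith) (hassoc t 0 0)
  rcases lt_trichotomy (f t) 1 with hlt | heq | hgt
  · have := hmono (mul_le_of_le_one_right ht.le hlt.le)
    linarith
  · exact heq
  · have := hmono (le_mul_of_one_le_right ht.le hgt.le)
    linarith

lemma softmax_of_lt (hsym : ∀ x, f x + f (-x) = 1) (hstep : ∀ t, 0 < t → f t = 1)
    (hab : a < b) : softmax f a b = b := by
  have hba : f (b - a) = 1 := hstep _ (sub_pos.mpr hab)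
  have hab' : f (a - b) = 0 := by linarith [neg_sub b a ▸ hsym (b - a)]
  simp [softmax, hba, hab']

lemma softmax_comm : softmax f a b = softmax f b a := add_comm _ _

lemma softmax_eq_max (hsym : ∀ x, f x + f (-x) = 1) (hstep : ∀ t, 0 < t → f t = 1)
    (a b : ℝ) : softmax f a b = max a b := by
  rcases lt_trichotomy a b with hab | rfl | hba
  · rw [softmax_of_lt hsym hstep hab, max_eq_right hab.le]
  · rw [softmax_self hsym, max_self]
  · rw [softmax_comm, softmax_of_lt hsym hstep hba, max_eq_left hba.le]

end Softmax

open Softmax in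
theorem stmt_15_general (f : ℝ → ℝ)
    (hmono : Monotone f) (hsym : ∀ x, f x + f (-x) = 1)
    (hassoc : ∀ a b c : ℝ,
      softmax f a (softmax f b c) = softmax f (softmax f a b) c) :
    (∀ a b : ℝ, softmax f a b = max a b) ∧
    ¬ (∃ x : ℝ, 0 < x ∧ 0 < f x ∧ f x < 1) := by
  have hstep : ∀ t, 0 < t → f t = 1 := fun _ => apply_eq_one_of_pos hmono hsym hassoc
  refine ⟨softmax_eq_max hsym hstep, ?_⟩
  rintro ⟨x, hx, -, hx1⟩
  exact hx1.ne (hstep x hx)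

theorem stmt_15 (f : ℝ → ℝ) (hrange : ∀ x, f x ∈ Set.Icc (0:ℝ) 1)
    (hmono : Monotone f) (hsym : ∀ x, f x + f (-x) = 1)
    (hassoc : ∀ a b c : ℝ,
      softmax f a (softmax f b c) = softmax f (softmax f a b) c) :
    (∀ a b : ℝ, softmax f a b = max a b) ∧
    ¬ (∃ x : ℝ, 0 < x ∧ 0 < f x ∧ f x < 1) :=
  stmt_15_general f hmono hsym hassoc
end

section
/- If f : ℝ → [0,1] is a differentiable sigmoid function such that softmin_f(x,0) = x·f(−x) is non-decreasing in x, then both softmin_f(a,b) and softmax_f(a,b) are non-decreasing in each of the arguments a and b. -/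
open Filter

def softmin (f : ℝ → ℝ) (a b : ℝ) : ℝ := a * f (b - a) + b * f (a - b)
/- By the symmetry `f x + f (-x) = 1`, both operators are shift invariant:
`softmin f a b = g (a - b) + b` with `g x = x * f (-x)`, and
`softmax f a b = h (a - b) + b` with `h x = x * f x = -g (-x)`.
So `g` monotone gives monotonicity in `a`, and both operators are symmetric in `a` and `b`. -/

section

variable {f : ℝ → ℝ}

theorem softmin_comm (f : ℝ → ℝ) (a b : ℝ) : softmin f a b = softmin f b a :=
  add_comm _ _

theorem softmax_comm (f : ℝ → ℝ) (a b : ℝ) : softmax f a b = softmax f b a :=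
  add_comm _ _

theorem softmin_eq_sub_add (hsym : ∀ x, f x + f (-x) = 1) (a b : ℝ) :
    softmin f a b = (a - b) * f (-(a - b)) + b := by
  have h := hsym (a - b)
  rw [neg_sub] at h ⊢
  unfold softmin
  linear_combination b * h

theorem softmax_eq_sub_add (hsym : ∀ x, f x + f (-x) = 1) (a b : ℝ) :
    softmax f a b = (a - b) * f (a - b) + b := by
  have h := hsym (b - a)
  rw [neg_sub] at h
  unfold softmax
  linear_combination b * h

theorem monotone_mul_self_of_monotone_mul_neg (hswap : Monotone fun x : ℝ => x * f (-x)) :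
    Monotone fun x : ℝ => x * f x := by
  intro x y hxy
  have h := hswap (neg_le_neg hxy)
  simp only [neg_neg, neg_mul] at h
  exact neg_le_neg_iff.mp h

theorem monotone_softmin_left (hsym : ∀ x, f x + f (-x) = 1)
    (hswap : Monotone fun x : ℝ => x * f (-x)) (b : ℝ) : Monotone fun a => softmin f a b := by
  intro x y hxy
  simp only [softmin_eq_sub_add hsym]
  exact add_le_add_left (hswap (sub_le_sub_right hxy b)) b

theorem monotone_softmax_left (hsym : ∀ x, f x + f (-x) = 1)
    (hswap : Monotone fun x : ℝ => x * f (-x)) (b : ℝ) : Monotone fun a => softmax f a b := by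
  intro x y hxy
  simp only [softmax_eq_sub_add hsym]
  exact add_le_add_left (monotone_mul_self_of_monotone_mul_neg hswap (sub_le_sub_right hxy b)) b

end

theorem stmt_19_general (f : ℝ → ℝ)
    (hsym : ∀ x, f x + f (-x) = 1)
    (hswap : Monotone (fun x : ℝ => x * f (-x))) :
    (∀ b : ℝ, Monotone (fun a => softmin f a b)) ∧
    (∀ a : ℝ, Monotone (fun b => softmin f a b)) ∧
    (∀ b : ℝ, Monotone (fun a => softmax f a b)) ∧
    (∀ a : ℝ, Monotone (fun b => softmax f a b)) := by
  refine ⟨monotone_softmin_left hsym hswap, fun a => ?_,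
    monotone_softmax_left hsym hswap, fun a => ?_⟩
  · simpa only [softmin_comm f a] using monotone_softmin_left hsym hswap a
  · simpa only [softmax_comm f a] using monotone_softmax_left hsym hswap a

theorem stmt_19 (f : ℝ → ℝ)
    (hdiff : Differentiable ℝ f)
    (hrange : ∀ x, f x ∈ Set.Icc (0:ℝ) 1)
    (hmono : Monotone f)
    (hsym : ∀ x, f x + f (-x) = 1)
    (hbot : Tendsto f atBot (nhds 0))
    (htop : Tendsto f atTop (nhds 1))
    (hswap : Monotone (fun x : ℝ => x * f (-x))) :
    (∀ b : ℝ, Monotone (fun a => softmin f a b)) ∧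
    (∀ a : ℝ, Monotone (fun b => softmin f a b)) ∧
    (∀ b : ℝ, Monotone (fun a => softmax f a b)) ∧
    (∀ a : ℝ, Monotone (fun b => softmax f a b)) :=
  stmt_19_general f hsym hswap
end
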